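/- arXiv:1808.02615 — 4 statements merged into one kernel-verified Lean document; each statement's English description precedes it below -/
import Mathlib

section
/- Let w, f : [a,b] → ℝ with w integrable and f twice continuously differentiable. Then ∫_a^b (2f(x) - f(a) - f(b)) w(x) dx = ∫_a^b Θ^{(1)}(x) f''(x) dx - (Θ^{(1)}(b) f'(b) - Θ^{(1)}(a) f'(a)), where Θ^{(1)}(x) = ∫_a^x w(ξ)(x-ξ) dξ + ∫_b^x w(ξ)(x-ξ) dξ. -/
/-!
Integrating by parts against `f''` turns the identity into one about `Θ' = W_a + W_b`, where
`W_c x = ∫_c^x w`. The derivative `Θ'` exists at every interior point because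
`∫_c^x w(ξ)(x - ξ) dξ = ∫_c^x W_c` (Cauchy's formula for repeated integration) is the
primitive of a continuous function. Since `w` is merely integrable, `W_c` is only absolutely
continuous, so the second integration by parts, of `(W_a + W_b) f'`, is the one for absolutely
continuous functions, with `W_c' = w` almost everywhere by the Lebesgue differentiation theorem.
-/

open MeasureTheory intervalIntegral Set Topology

namespace intervalIntegral

variable {g F : ℝ → ℝ} {a b c d : ℝ}

theorem integral_primitive_mul_deriv (hg : IntervalIntegrable g volume c d)
    (hF : AbsolutelyContinuousOnInterval F c d) :
    ∫ x in c..d, (∫ t in c..x, g t) * deriv F x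
      = (∫ t in c..d, g t) * F d - ∫ x in c..d, g x * F x := by
  have hG := hg.absolutelyContinuousOnInterval_intervalIntegral (c := c) left_mem_uIcc
  rw [hG.integral_mul_deriv_eq_deriv_mul hF, integral_same, zero_mul, sub_zero]
  congr 1
  refine integral_congr_ae ?_
  filter_upwards [hg.ae_hasDerivAt_integral] with x hx hxI
  rw [(hx (uIoc_subset_uIcc hxI) c left_mem_uIcc).deriv]

theorem integral_mul_sub_eq_integral_primitive (hg : IntervalIntegrable g volume c d) :
    ∫ ξ in c..d, g ξ * (d - ξ) = ∫ x in c..d, ∫ t in c..x, g t := by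
  have h := integral_primitive_mul_deriv hg
    (contDiffOn_id (s := uIcc c d)).absolutelyContinuousOnInterval
  simp only [deriv_id, mul_one, id] at h
  simp_rw [h, mul_sub]
  rw [integral_sub (hg.mul_const d) (hg.mul_continuousOn (continuousOn_id' _)), integral_mul_const]

theorem eqOn_integral_mul_sub_primitive (hg : IntervalIntegrable g volume a b)
    (hc : c ∈ uIcc a b) :
    EqOn (fun y => ∫ ξ in c..y, g ξ * (y - ξ)) (fun y => ∫ x in c..y, ∫ t in c..x, g t)
      (uIcc a b) :=
  fun _ hy => integral_mul_sub_eq_integral_primitive (hg.mono_set (uIcc_subset_uIcc hc hy))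

theorem continuousOn_integral_mul_sub (hg : IntervalIntegrable g volume a b) (hc : c ∈ uIcc a b) :
    ContinuousOn (fun y => ∫ ξ in c..y, g ξ * (y - ξ)) (uIcc a b) := by
  refine (continuousOn_primitive_interval' ?_ hc).congr (eqOn_integral_mul_sub_primitive hg hc)
  exact (continuousOn_primitive_interval' hg hc).intervalIntegrable

theorem hasDerivAt_integral_mul_sub (hg : IntervalIntegrable g volume a b) (hc : c ∈ uIcc a b)
    {x : ℝ} (hx : x ∈ Ioo (min a b) (max a b)) :
    HasDerivAt (fun y => ∫ ξ in c..y, g ξ * (y - ξ)) (∫ t in c..x, g t) x := by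
  have hG := continuousOn_primitive_interval' hg hc
  have hnhds : uIcc a b ∈ 𝓝 x :=
    Filter.mem_of_superset (Ioo_mem_nhds hx.1 hx.2) Ioo_subset_Icc_self
  refine HasDerivAt.congr_of_eventuallyEq ?_
    (Filter.eventuallyEq_of_mem hnhds (eqOn_integral_mul_sub_primitive hg hc))
  exact integral_hasDerivAt_right
    (hG.mono (uIcc_subset_uIcc hc (Ioo_subset_Icc_self hx))).intervalIntegrable
    ((hG.mono Ioo_subset_Icc_self).stronglyMeasurableAtFilter isOpen_Ioo x hx)
    (hG.continuousAt hnhds)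

theorem integral_primitives_add_mul_deriv (hg : IntervalIntegrable g volume a b)
    (hF : AbsolutelyContinuousOnInterval F a b) :
    ∫ x in a..b, ((∫ t in a..x, g t) + ∫ t in b..x, g t) * deriv F x
      = (∫ t in a..b, g t) * (F a + F b) - 2 * ∫ x in a..b, g x * F x := by
  have hWF := integral_primitive_mul_deriv hg hF
  have hVF := integral_primitive_mul_deriv hg.symm hF.symm
  simp only [integral_symm a b] at hVF
  have hF' := hF.intervalIntegrable_deriv
  simp_rw [add_mul]
  rw [integral_add (hF'.continuousOn_mul (continuousOn_primitive_interval' hg left_mem_uIcc))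
    (hF'.continuousOn_mul (continuousOn_primitive_interval' hg right_mem_uIcc))]
  linarith

end intervalIntegral

theorem stmt_2_general (a b : ℝ) (w f f' f'' : ℝ → ℝ)
    (hw : IntervalIntegrable w volume a b)
    (hf : ∀ x, HasDerivAt f (f' x) x)
    (hf' : ∀ x, HasDerivAt f' (f'' x) x)
    (hf'' : IntervalIntegrable f'' volume a b) :
    (∫ x in a..b, (2 * f x - f a - f b) * w x) =
      (∫ x in a..b, ((∫ ξ in a..x, w ξ * (x - ξ)) + (∫ ξ in b..x, w ξ * (x - ξ))) * f'' x)
        - (((∫ ξ in a..b, w ξ * (b - ξ)) + (∫ ξ in b..b, w ξ * (b - ξ))) * f' b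
           - ((∫ ξ in a..a, w ξ * (a - ξ)) + (∫ ξ in b..a, w ξ * (a - ξ))) * f' a) := by
  have ha : a ∈ uIcc a b := left_mem_uIcc
  have hb : b ∈ uIcc a b := right_mem_uIcc
  have hf'c : Continuous f' := continuous_iff_continuousAt.2 fun x => (hf' x).continuousAt
  have hderiv : deriv f = f' := funext fun x => (hf x).deriv
  have hfac : AbsolutelyContinuousOnInterval f a b :=
    (contDiff_one_iff_deriv.2 ⟨fun x => (hf x).differentiableAt, hderiv ▸ hf'c⟩).contDiffOn
      |>.absolutelyContinuousOnInterval
  have parts := integral_mul_deriv_eq_deriv_mul_of_hasDerivAt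
    ((continuousOn_integral_mul_sub hw ha).add (continuousOn_integral_mul_sub hw hb))
    hf'c.continuousOn
    (fun x hx => (hasDerivAt_integral_mul_sub hw ha hx).add (hasDerivAt_integral_mul_sub hw hb hx))
    (fun x _ => hf' x)
    ((continuousOn_primitive_interval' hw ha).add
      (continuousOn_primitive_interval' hw hb)).intervalIntegrable
    hf''
  have hLHS : ∫ x in a..b, (2 * f x - f a - f b) * w x
      = 2 * (∫ x in a..b, w x * f x) - (f a + f b) * ∫ x in a..b, w x := by
    rw [← intervalIntegral.integral_const_mul, ← intervalIntegral.integral_const_mul,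
      ← intervalIntegral.integral_sub ((hw.mul_continuousOn hfac.continuousOn).const_mul 2)
        (hw.const_mul _)]
    congr 1; funext x; ring
  simp only [Pi.add_apply] at parts
  rw [hLHS, parts, ← hderiv, integral_primitives_add_mul_deriv hw hfac]
  simp only [integral_same]
  ring

theorem stmt_2 (a b : ℝ) (hab : a < b) (w f f' f'' : ℝ → ℝ)
    (hw : IntervalIntegrable w volume a b)
    (hf : ∀ x, HasDerivAt f (f' x) x)
    (hf' : ∀ x, HasDerivAt f' (f'' x) x)
    (hf'' : IntervalIntegrable f'' volume a b) :
    (∫ x in a..b, (2 * f x - f a - f b) * w x) =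
      (∫ x in a..b, ((∫ ξ in a..x, w ξ * (x - ξ)) + (∫ ξ in b..x, w ξ * (x - ξ))) * f'' x)
        - (((∫ ξ in a..b, w ξ * (b - ξ)) + (∫ ξ in b..b, w ξ * (b - ξ))) * f' b
           - ((∫ ξ in a..a, w ξ * (a - ξ)) + (∫ ξ in b..a, w ξ * (a - ξ))) * f' a) :=
  stmt_2_general a b w f f' f'' hw hf hf' hf''
end

section
/- Let u : ℝ → ℝ be continuously differentiable with u' uniformly Hölder continuous with exponent s ∈ (0,1], and let γ ∈ (0, 2]. Define φ_γ(x,ξ) = (u(x-ξ) - 2u(x) + u(x+ξ))/ξ^γ for ξ > 0. Then φ_γ is differentiable in ξ on (0,∞) and there exists C > 0 such that |∂_ξ φ_γ(x,ξ)| ≤ C ξ^{s-γ} for all ξ > 0. -/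
/-! The numerator `g(ξ) = u(x - ξ) - 2u(x) + u(x + ξ)` vanishes at `ξ = 0` and has derivative
`u'(x + ξ) - u'(x - ξ)`, which the Hölder condition bounds by `K (2ξ)^s`. The mean value theorem
then gives `|g(ξ)| ≤ K 2^s ξ^(s+1)`, and both terms of the quotient rule for `g(ξ) / ξ^γ` are
`O(ξ^(s-γ))`. -/

open Real Set

section SecondDifference

variable {u u' : ℝ → ℝ} {K s : ℝ}

theorem hasDerivAt_secondDiff (hu : ∀ x, HasDerivAt u (u' x) x) (x ξ : ℝ) :
    HasDerivAt (fun ξ => u (x - ξ) - 2 * u x + u (x + ξ)) (u' (x + ξ) - u' (x - ξ)) ξ := by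
  have hminus : HasDerivAt (fun ξ => u (x - ξ)) (-u' (x - ξ)) ξ := by
    simpa [Function.comp_def] using (hu (x - ξ)).comp ξ ((hasDerivAt_id ξ).const_sub x)
  have hplus : HasDerivAt (fun ξ => u (x + ξ)) (u' (x + ξ)) ξ := by
    simpa [Function.comp_def] using (hu (x + ξ)).comp ξ ((hasDerivAt_id ξ).const_add x)
  exact ((hminus.sub_const (2 * u x)).add hplus).congr_deriv (by ring)

theorem abs_sub_le_of_holder (hu' : ∀ x y : ℝ, |u' x - u' y| ≤ K * |x - y| ^ s)
    (hK : 0 ≤ K) (hs : 0 ≤ s) {x t ξ : ℝ} (ht : 0 ≤ t) (htξ : t ≤ ξ) :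
    |u' (x + t) - u' (x - t)| ≤ K * 2 ^ s * ξ ^ s :=
  calc |u' (x + t) - u' (x - t)| ≤ K * |x + t - (x - t)| ^ s := hu' _ _
    _ = K * 2 ^ s * t ^ s := by
      rw [show x + t - (x - t) = 2 * t by ring, abs_of_nonneg (by linarith),
        mul_rpow zero_le_two ht, mul_assoc]
    _ ≤ K * 2 ^ s * ξ ^ s := by gcongr

theorem abs_secondDiff_le (hu : ∀ x, HasDerivAt u (u' x) x)
    (hu' : ∀ x y : ℝ, |u' x - u' y| ≤ K * |x - y| ^ s) (hK : 0 ≤ K) (hs : 0 ≤ s)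
    {x ξ : ℝ} (hξ : 0 ≤ ξ) :
    |u (x - ξ) - 2 * u x + u (x + ξ)| ≤ K * 2 ^ s * ξ ^ s * ξ := by
  have hmvt := norm_image_sub_le_of_norm_deriv_le_segment'
    (fun t _ => (hasDerivAt_secondDiff hu x t).hasDerivWithinAt)
    (fun t ht => (abs_sub_le_of_holder hu' hK hs ht.1 ht.2.le :
      ‖u' (x + t) - u' (x - t)‖ ≤ K * 2 ^ s * ξ ^ s)) ξ (right_mem_Icc.2 hξ)
  simp only [sub_zero, add_zero, norm_eq_abs] at hmvt
  rwa [show u x - 2 * u x + u x = 0 by ring, sub_zero] at hmvt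

theorem hasDerivAt_secondDiff_div_rpow (hu : ∀ x, HasDerivAt u (u' x) x) (γ x : ℝ) {ξ : ℝ}
    (hξ : 0 < ξ) :
    HasDerivAt (fun ξ => (u (x - ξ) - 2 * u x + u (x + ξ)) / ξ ^ γ)
      ((u' (x + ξ) - u' (x - ξ)) / ξ ^ γ
        - γ * (u (x - ξ) - 2 * u x + u (x + ξ)) / ξ ^ (γ + 1)) ξ := by
  refine ((hasDerivAt_secondDiff hu x ξ).div (hasDerivAt_rpow_const (Or.inl hξ.ne'))
    (rpow_pos_of_pos hξ γ).ne').congr_deriv ?_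
  rw [rpow_sub_one hξ.ne', rpow_add_one hξ.ne']
  field_simp

theorem abs_deriv_secondDiff_div_rpow_le (hu : ∀ x, HasDerivAt u (u' x) x)
    (hu' : ∀ x y : ℝ, |u' x - u' y| ≤ K * |x - y| ^ s) (hK : 0 ≤ K) (hs : 0 ≤ s)
    (γ x : ℝ) {ξ : ℝ} (hξ : 0 < ξ) :
    |deriv (fun ξ => (u (x - ξ) - 2 * u x + u (x + ξ)) / ξ ^ γ) ξ|
      ≤ (1 + |γ|) * (K * 2 ^ s) * ξ ^ (s - γ) := by
  rw [(hasDerivAt_secondDiff_div_rpow hu γ x hξ).deriv]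
  have hξγ : 0 < ξ ^ γ := rpow_pos_of_pos hξ γ
  have hrpow : ξ ^ (s - γ) = ξ ^ s / ξ ^ γ := rpow_sub hξ s γ
  have hfirst : |(u' (x + ξ) - u' (x - ξ)) / ξ ^ γ| ≤ K * 2 ^ s * ξ ^ (s - γ) := by
    rw [abs_div, abs_of_pos hξγ, hrpow, ← mul_div_assoc]
    gcongr
    exact abs_sub_le_of_holder hu' hK hs hξ.le le_rfl
  have hsecond : |γ * (u (x - ξ) - 2 * u x + u (x + ξ)) / ξ ^ (γ + 1)|
      ≤ |γ| * (K * 2 ^ s) * ξ ^ (s - γ) := by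
    rw [abs_div, abs_mul, abs_of_pos (rpow_pos_of_pos hξ _), rpow_add_one hξ.ne', hrpow]
    calc |γ| * |u (x - ξ) - 2 * u x + u (x + ξ)| / (ξ ^ γ * ξ)
        ≤ |γ| * (K * 2 ^ s * ξ ^ s * ξ) / (ξ ^ γ * ξ) := by
          gcongr
          exact abs_secondDiff_le hu hu' hK hs hξ.le
      _ = |γ| * (K * 2 ^ s) * (ξ ^ s / ξ ^ γ) := by field_simp
  calc _ ≤ _ := abs_sub _ _
    _ ≤ K * 2 ^ s * ξ ^ (s - γ) + |γ| * (K * 2 ^ s) * ξ ^ (s - γ) := add_le_add hfirst hsecond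
    _ = (1 + |γ|) * (K * 2 ^ s) * ξ ^ (s - γ) := by ring

end SecondDifference

theorem stmt_5_general (u u' : ℝ → ℝ) (s K γ : ℝ) (hs : s ∈ Set.Ioc (0:ℝ) 1)
    (hu : ∀ x, HasDerivAt u (u' x) x)
    (hu' : ∀ x y : ℝ, |u' x - u' y| ≤ K * |x - y| ^ s) :
    (∀ x ξ : ℝ, 0 < ξ →
      DifferentiableAt ℝ (fun ξ => (u (x - ξ) - 2 * u x + u (x + ξ)) / ξ ^ γ) ξ) ∧
    ∃ C > 0, ∀ x ξ : ℝ, 0 < ξ →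
      |deriv (fun ξ => (u (x - ξ) - 2 * u x + u (x + ξ)) / ξ ^ γ) ξ| ≤ C * ξ ^ (s - γ) := by
  have hK : 0 ≤ K := by simpa using (abs_nonneg _).trans (hu' 1 0)
  refine ⟨fun x ξ hξ => (hasDerivAt_secondDiff_div_rpow hu γ x hξ).differentiableAt,
    (1 + |γ|) * (K * 2 ^ s) + 1, by positivity, fun x ξ hξ => ?_⟩
  calc _ ≤ (1 + |γ|) * (K * 2 ^ s) * ξ ^ (s - γ) :=
        abs_deriv_secondDiff_div_rpow_le hu hu' hK hs.1.le γ x hξ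
    _ ≤ ((1 + |γ|) * (K * 2 ^ s) + 1) * ξ ^ (s - γ) := by
        gcongr
        linarith

theorem stmt_5 (u u' : ℝ → ℝ) (s K γ : ℝ) (hs : s ∈ Set.Ioc (0:ℝ) 1)
    (hγ : γ ∈ Set.Ioc (0:ℝ) 2)
    (hu : ∀ x, HasDerivAt u (u' x) x)
    (hu' : ∀ x y : ℝ, |u' x - u' y| ≤ K * |x - y| ^ s) :
    (∀ x ξ : ℝ, 0 < ξ →
      DifferentiableAt ℝ (fun ξ => (u (x - ξ) - 2 * u x + u (x + ξ)) / ξ ^ γ) ξ) ∧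
    ∃ C > 0, ∀ x ξ : ℝ, 0 < ξ →
      |deriv (fun ξ => (u (x - ξ) - 2 * u x + u (x + ξ)) / ξ ^ γ) ξ| ≤ C * ξ ^ (s - γ) :=
  stmt_5_general u u' s K γ hs hu hu'
end

section
/- Let u : ℝ → ℝ be twice continuously differentiable with u'' uniformly Hölder continuous with exponent s ∈ (0,1]. Define φ_2(x,ξ) = (u(x-ξ) - 2u(x) + u(x+ξ))/ξ^2 for ξ > 0. Then there exists C > 0 such that |∂_ξ φ_2(x,ξ)| ≤ C ξ^{s-1} for all ξ > 0. -/
/-!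
Write `N(ξ) = u(x - ξ) - 2u(x) + u(x + ξ)`, so that `φ₂ = N / ξ²` and
`∂_ξ φ₂ = N'(ξ) / ξ² - 2 N(ξ) / ξ³`. Subtracting the Taylor polynomials `2ξ u''(x)` from `N'`
and `ξ² u''(x)` from `N` leaves this expression unchanged, and the mean value theorem turns the
Hölder bound on `u''` into remainders `O(ξ^(1+s))` and `O(ξ^(2+s))`, whence `O(ξ^(s-1))`.
-/

open Metric

section HolderTaylor

variable {f : ℝ → ℝ} {K s : ℝ}

lemma nonneg_of_abs_sub_le_mul_rpow (hH : ∀ a b : ℝ, |f a - f b| ≤ K * |a - b| ^ s) : 0 ≤ K := by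
  simpa using (abs_nonneg _).trans (hH 1 0)

lemma hasDerivAt_secondDifference (hf : Differentiable ℝ f) (x y : ℝ) :
    HasDerivAt (fun y => f (x - y) - 2 * f x + f (x + y))
      (deriv f (x + y) - deriv f (x - y)) y := by
  have hl := (hf (x - y)).hasDerivAt.comp_const_sub x y
  have hr := (hf (x + y)).hasDerivAt.comp_const_add x y
  exact ((hl.sub_const (2 * f x)).add hr).congr_deriv (by ring)

lemma abs_le_of_hasDerivAt_of_abs_deriv_le {g g' : ℝ → ℝ} {M : ℝ}
    (hg : ∀ y, HasDerivAt g (g' y) y) (hg0 : g 0 = 0) (t : ℝ)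
    (hbound : ∀ y, |y| ≤ |t| → |g' y| ≤ M) : |g t| ≤ M * |t| := by
  have hmvt := (convex_closedBall (0 : ℝ) |t|).norm_image_sub_le_of_norm_hasDerivWithin_le
    (fun y _ => (hg y).hasDerivWithinAt) (fun y hy => hbound y (by simpa using hy))
    (mem_closedBall_self (abs_nonneg t)) (by simp : t ∈ closedBall (0 : ℝ) |t|)
  simpa [hg0] using hmvt

lemma abs_sub_sub_mul_deriv_le (hf : Differentiable ℝ f) (hs : 0 ≤ s)
    (hH : ∀ a b : ℝ, |deriv f a - deriv f b| ≤ K * |a - b| ^ s) (x t : ℝ) :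
    |f (x + t) - f x - t * deriv f x| ≤ K * |t| ^ (1 + s) := by
  have hK := nonneg_of_abs_sub_le_mul_rpow hH
  have hg : ∀ y, HasDerivAt (fun y => f (x + y) - f x - y * deriv f x)
      (deriv f (x + y) - deriv f x) y := fun y =>
    (((hf (x + y)).hasDerivAt.comp_const_add x y).sub_const (f x)).sub
      (hasDerivAt_mul_const (deriv f x))
  have hbound : ∀ y, |y| ≤ |t| → |deriv f (x + y) - deriv f x| ≤ K * |t| ^ s := fun y hy =>
    calc |deriv f (x + y) - deriv f x| ≤ K * |x + y - x| ^ s := hH _ _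
      _ ≤ K * |t| ^ s := by rw [add_sub_cancel_left]; gcongr
  calc |f (x + t) - f x - t * deriv f x| ≤ K * |t| ^ s * |t| :=
        abs_le_of_hasDerivAt_of_abs_deriv_le hg (by simp) t hbound
    _ = K * |t| ^ (1 + s) := by
      rw [Real.rpow_one_add' (abs_nonneg t) (by positivity)]
      ring

lemma abs_sub_sub_two_mul_deriv_le (hf : Differentiable ℝ f) (hs : 0 ≤ s)
    (hH : ∀ a b : ℝ, |deriv f a - deriv f b| ≤ K * |a - b| ^ s) (x t : ℝ) :
    |f (x + t) - f (x - t) - 2 * t * deriv f x| ≤ 2 * K * |t| ^ (1 + s) := by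
  have hplus := abs_sub_sub_mul_deriv_le hf hs hH x t
  have hminus := abs_sub_sub_mul_deriv_le hf hs hH x (-t)
  rw [abs_neg, ← sub_eq_add_neg] at hminus
  calc |f (x + t) - f (x - t) - 2 * t * deriv f x|
      = |(f (x + t) - f x - t * deriv f x) - (f (x - t) - f x - -t * deriv f x)| := by ring_nf
    _ ≤ _ := abs_sub _ _
    _ ≤ 2 * K * |t| ^ (1 + s) := by linarith

lemma abs_secondDifference_sub_sq_mul_deriv_deriv_le (hf : Differentiable ℝ f)
    (hf' : Differentiable ℝ (deriv f)) (hs : 0 ≤ s)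
    (hH : ∀ a b : ℝ, |deriv (deriv f) a - deriv (deriv f) b| ≤ K * |a - b| ^ s) (x t : ℝ) :
    |f (x - t) - 2 * f x + f (x + t) - t ^ 2 * deriv (deriv f) x| ≤ 2 * K * |t| ^ (2 + s) := by
  have hK := nonneg_of_abs_sub_le_mul_rpow hH
  have hg : ∀ y, HasDerivAt (fun y => f (x - y) - 2 * f x + f (x + y) - y ^ 2 * deriv (deriv f) x)
      (deriv f (x + y) - deriv f (x - y) - 2 * y * deriv (deriv f) x) y := fun y =>
    ((hasDerivAt_secondDifference hf x y).sub
      ((hasDerivAt_pow 2 y).mul_const (deriv (deriv f) x))).congr_deriv (by push_cast; ring)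
  have hbound : ∀ y, |y| ≤ |t| →
      |deriv f (x + y) - deriv f (x - y) - 2 * y * deriv (deriv f) x| ≤ 2 * K * |t| ^ (1 + s) :=
    fun y hy =>
    calc _ ≤ 2 * K * |y| ^ (1 + s) := abs_sub_sub_two_mul_deriv_le hf' hs hH x y
      _ ≤ 2 * K * |t| ^ (1 + s) := by gcongr
  calc _ ≤ 2 * K * |t| ^ (1 + s) * |t| :=
        abs_le_of_hasDerivAt_of_abs_deriv_le hg (by simp; ring) t hbound
    _ = 2 * K * |t| ^ (2 + s) := by
      rw [show (2 + s) = (1 + s) + 1 by ring, Real.rpow_add_one' (abs_nonneg t) (by positivity)]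
      ring

end HolderTaylor

lemma deriv_secondDifference_div_sq {f : ℝ → ℝ} (hf : Differentiable ℝ f) (x c : ℝ) {ξ : ℝ}
    (hξ : ξ ≠ 0) :
    deriv (fun ξ => (f (x - ξ) - 2 * f x + f (x + ξ)) / ξ ^ 2) ξ
      = (deriv f (x + ξ) - deriv f (x - ξ) - 2 * ξ * c) / ξ ^ 2
        - 2 * (f (x - ξ) - 2 * f x + f (x + ξ) - ξ ^ 2 * c) / ξ ^ 3 := by
  refine ((hasDerivAt_secondDifference hf x ξ).div (hasDerivAt_pow 2 ξ)
    (pow_ne_zero 2 hξ)).deriv.trans ?_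
  field_simp
  ring

lemma abs_div_sq_sub_two_mul_div_cube_le {A B M ξ : ℝ} (hξ : 0 < ξ) (hA : |A| ≤ M * ξ ^ 2)
    (hB : |B| ≤ M * ξ ^ 3) : |A / ξ ^ 2 - 2 * B / ξ ^ 3| ≤ 3 * M := by
  calc _ ≤ |A| / ξ ^ 2 + 2 * |B| / ξ ^ 3 := by
        refine (abs_sub _ _).trans_eq ?_
        rw [abs_div, abs_div, abs_mul, abs_two, abs_of_pos (by positivity : 0 < ξ ^ 2),
          abs_of_pos (by positivity : 0 < ξ ^ 3)]
    _ ≤ M * ξ ^ 2 / ξ ^ 2 + 2 * (M * ξ ^ 3) / ξ ^ 3 := by gcongr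
    _ = 3 * M := by field_simp; ring

theorem stmt_6 (u : ℝ → ℝ) (s K : ℝ) (hs : s ∈ Set.Ioc (0:ℝ) 1)
    (hu : ContDiff ℝ 2 u)
    (hu'' : ∀ x y : ℝ, |iteratedDeriv 2 u x - iteratedDeriv 2 u y| ≤ K * |x - y| ^ s) :
    ∃ C > 0, ∀ x ξ : ℝ, 0 < ξ →
      |deriv (fun ξ => (u (x - ξ) - 2 * u x + u (x + ξ)) / ξ ^ 2) ξ| ≤ C * ξ ^ (s - 1) := by
  simp only [iteratedDeriv_succ] at hu''
  have hu1 : Differentiable ℝ u := hu.differentiable (by norm_num)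
  have hu2 : Differentiable ℝ (deriv u) := by
    simpa using hu.differentiable_iteratedDeriv 1 (by norm_num)
  have hK := nonneg_of_abs_sub_le_mul_rpow hu''
  refine ⟨6 * K + 1, by positivity, fun x ξ hξ => ?_⟩
  have hA := abs_sub_sub_two_mul_deriv_le hu2 hs.1.le hu'' x ξ
  have hB := abs_secondDifference_sub_sq_mul_deriv_deriv_le hu1 hu2 hs.1.le hu'' x ξ
  rw [abs_of_pos hξ] at hA hB
  have hpow : ∀ n : ℕ, ξ ^ (s - 1 + n) = ξ ^ (s - 1) * ξ ^ n := fun n => by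
    rw [Real.rpow_add hξ, Real.rpow_natCast]
  rw [show 1 + s = s - 1 + (2 : ℕ) by push_cast; ring, hpow] at hA
  rw [show 2 + s = s - 1 + (3 : ℕ) by push_cast; ring, hpow] at hB
  rw [deriv_secondDifference_div_sq hu1 x (deriv (deriv u) x) hξ.ne']
  calc _ ≤ 3 * (2 * K * ξ ^ (s - 1)) :=
        abs_div_sq_sub_two_mul_div_cube_le hξ (by linarith) (by linarith)
    _ ≤ (6 * K + 1) * ξ ^ (s - 1) := by nlinarith [Real.rpow_pos_of_pos hξ (s - 1)]
end

section
/- Let u : ℝ → ℝ be three times continuously differentiable with u''' uniformly Hölder continuous with exponent s ∈ (0,1]. Define φ_2(x,ξ) = (u(x-ξ) - 2u(x) + u(x+ξ))/ξ^2 for ξ > 0. Then there exists C > 0 such that |∂²_ξ φ_2(x,ξ)| ≤ C ξ^{s-1} for all ξ > 0. -/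
/-!
Write `g ξ = u (x - ξ) - 2 u x + u (x + ξ)`, so that `φ₂ = g / ξ²` and
`φ₂'' = g'' / ξ² - 4 g' / ξ³ + 6 g / ξ⁴`, where `g'' = u''(x + ξ) + u''(x - ξ)` and
`g' = u'(x + ξ) - u'(x - ξ)`. Expanding `u''`, `u'`, `u` around `x` to orders one, two and
three, the odd Taylor terms cancel by symmetry and the even ones contribute
`(2 - 8 + 6) u''(x) / ξ² = 0`. Since `u'''` is `s`-Hölder, the remainder of order `k` is at
most `K ξ ^ (s + k)`, and dividing by `ξ ^ (k + 1)` leaves `K ξ ^ (s - 1)`.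
-/

open Real Set Filter Topology

lemma abs_sub_le_mul_rpow_of_hasDerivAt {f f' : ℝ → ℝ} {a c r : ℝ} (hc : 0 ≤ c) (hr : 0 ≤ r)
    (hf : ∀ t, HasDerivAt f (f' t) t) (hf' : ∀ t, |f' t| ≤ c * |t - a| ^ r) (b : ℝ) :
    |f b - f a| ≤ c * |b - a| ^ (r + 1) := by
  have hbound : ∀ t ∈ uIcc a b, ‖f' t‖ ≤ c * |b - a| ^ r := fun t ht =>
    (hf' t).trans <| mul_le_mul_of_nonneg_left
      (rpow_le_rpow (abs_nonneg _) (abs_sub_left_of_mem_uIcc ht) hr) hc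
  have := (convex_uIcc a b).norm_image_sub_le_of_norm_hasDerivWithin_le
    (fun t _ => (hf t).hasDerivWithinAt) hbound left_mem_uIcc right_mem_uIcc
  rwa [rpow_add_one' (abs_nonneg _) (by positivity), ← mul_assoc]

theorem abs_sub_taylorWithinEval_le_of_holder {n : ℕ} {f : ℝ → ℝ} {K s : ℝ} (hK : 0 ≤ K)
    (hs : 0 ≤ s) (hf : ContDiff ℝ n f)
    (hH : ∀ x y, |iteratedDeriv n f x - iteratedDeriv n f y| ≤ K * |x - y| ^ s) (a b : ℝ) :
    |f b - taylorWithinEval f n univ a b| ≤ K * |b - a| ^ (s + n) := by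
  induction n generalizing f b with
  | zero => simpa using hH b a
  | succ n ih =>
    have hdf : Differentiable ℝ f := hf.differentiable (by simp)
    have hR : ∀ t, HasDerivAt (fun t => f t - taylorWithinEval f (n + 1) univ a t)
        (deriv f t - taylorWithinEval (deriv f) n univ a t) t := fun t => by
      simpa only [derivWithin_univ] using
        (hdf t).hasDerivAt.fun_sub (hasDerivAt_taylorWithinEval_succ (s := univ) (x₀ := a) f n)
    have := abs_sub_le_mul_rpow_of_hasDerivAt hK (by positivity) hR
      (ih hf.deriv' (by simpa only [iteratedDeriv_succ'] using hH)) b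
    simpa [add_assoc] using this

theorem exists_eq_taylorWithinEval_add_of_holder {n : ℕ} {f : ℝ → ℝ} {K s : ℝ} (hK : 0 ≤ K)
    (hs : 0 ≤ s) (hf : ContDiff ℝ n f)
    (hH : ∀ x y, |iteratedDeriv n f x - iteratedDeriv n f y| ≤ K * |x - y| ^ s) (a : ℝ) {h : ℝ}
    (hh : h ≠ 0) :
    ∃ r, f (a + h) = taylorWithinEval f n univ a (a + h) + r * |h| ^ (n + 1) ∧
      |r| ≤ K * |h| ^ (s - 1) := by
  have hpos : 0 < |h| ^ (n + 1) := by positivity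
  refine ⟨(f (a + h) - taylorWithinEval f n univ a (a + h)) / |h| ^ (n + 1), by field_simp; ring,
    ?_⟩
  have hsplit : |h| ^ (s + n) = |h| ^ (s - 1) * |h| ^ (n + 1) := by
    rw [← rpow_natCast, ← rpow_add (abs_pos.mpr hh)]; push_cast; ring_nf
  rw [abs_div, abs_of_pos hpos, div_le_iff₀ hpos, mul_assoc, ← hsplit]
  simpa using abs_sub_taylorWithinEval_le_of_holder hK hs hf hH a (a + h)

lemma deriv_deriv_div_sq {g g' : ℝ → ℝ} {g'' ξ : ℝ} (hg : ∀ t, HasDerivAt g (g' t) t)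
    (hg' : HasDerivAt g' g'' ξ) (hξ : ξ ≠ 0) :
    deriv (deriv fun t => g t / t ^ 2) ξ = g'' / ξ ^ 2 - 4 * g' ξ / ξ ^ 3 + 6 * g ξ / ξ ^ 4 := by
  have hd : deriv (fun t => g t / t ^ 2) =ᶠ[𝓝 ξ] fun t => g' t / t ^ 2 - 2 * g t / t ^ 3 := by
    filter_upwards [isOpen_ne.mem_nhds hξ] with t ht
    rw [((hg t).fun_div (hasDerivAt_pow 2 t) (pow_ne_zero 2 ht)).deriv]
    field_simp
    ring
  rw [hd.deriv_eq, ((hg'.fun_div (hasDerivAt_pow 2 ξ) (pow_ne_zero 2 hξ)).fun_sub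
    (((hg ξ).const_mul 2).fun_div (hasDerivAt_pow 3 ξ) (pow_ne_zero 3 hξ))).deriv]
  field_simp
  ring

section SymmetricDifferences

variable {f : ℝ → ℝ} (x : ℝ)

lemma hasDerivAt_comp_add_sub_comp_sub (hf : Differentiable ℝ f) (t : ℝ) :
    HasDerivAt (fun t => f (x + t) - f (x - t)) (deriv f (x + t) + deriv f (x - t)) t :=
  (((hf _).hasDerivAt.comp_const_add x t).sub
    ((hf _).hasDerivAt.comp_const_sub x t)).congr_deriv (by ring)

lemma hasDerivAt_secondSymmDiff (hf : Differentiable ℝ f) (t : ℝ) :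
    HasDerivAt (fun t => f (x - t) - 2 * f x + f (x + t)) (deriv f (x + t) - deriv f (x - t)) t :=
  ((((hf _).hasDerivAt.comp_const_sub x t).sub_const (2 * f x)).add
    ((hf _).hasDerivAt.comp_const_add x t)).congr_deriv (by ring)

lemma deriv_deriv_secondSymmDiff_div_sq (hf : ContDiff ℝ 2 f) {ξ : ℝ} (hξ : ξ ≠ 0) :
    deriv (deriv fun ξ => (f (x - ξ) - 2 * f x + f (x + ξ)) / ξ ^ 2) ξ =
      (deriv (deriv f) (x + ξ) + deriv (deriv f) (x - ξ)) / ξ ^ 2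
        - 4 * (deriv f (x + ξ) - deriv f (x - ξ)) / ξ ^ 3
        + 6 * (f (x - ξ) - 2 * f x + f (x + ξ)) / ξ ^ 4 := by
  have hf' : ContDiff ℝ 1 (deriv f) := hf.deriv'
  exact deriv_deriv_div_sq (hasDerivAt_secondSymmDiff x (hf.differentiable (by simp)))
    (hasDerivAt_comp_add_sub_comp_sub x (hf'.differentiable (by simp)) ξ) hξ

lemma abs_deriv_deriv_secondSymmDiff_div_sq_le {K s : ℝ} (hK : 0 ≤ K) (hs : 0 ≤ s)
    (hf : ContDiff ℝ 3 f)
    (hH : ∀ x y, |iteratedDeriv 3 f x - iteratedDeriv 3 f y| ≤ K * |x - y| ^ s)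
    {ξ : ℝ} (hξ : 0 < ξ) :
    |deriv (deriv fun ξ => (f (x - ξ) - 2 * f x + f (x + ξ)) / ξ ^ 2) ξ| ≤
      22 * K * ξ ^ (s - 1) := by
  have hf₁ : ContDiff ℝ 2 (deriv f) := hf.deriv'
  have hf₂ : ContDiff ℝ 1 (deriv (deriv f)) := hf₁.deriv'
  have hH₁ : ∀ x y, |iteratedDeriv 2 (deriv f) x - iteratedDeriv 2 (deriv f) y| ≤
      K * |x - y| ^ s := by simpa only [iteratedDeriv_succ'] using hH
  have hH₂ : ∀ x y, |iteratedDeriv 1 (deriv (deriv f)) x - iteratedDeriv 1 (deriv (deriv f)) y| ≤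
      K * |x - y| ^ s := by simpa only [iteratedDeriv_succ'] using hH
  have hξ' : -ξ ≠ 0 := neg_ne_zero.mpr hξ.ne'
  obtain ⟨r₀, e₀, b₀⟩ := exists_eq_taylorWithinEval_add_of_holder hK hs hf hH x hξ.ne'
  obtain ⟨r₀', e₀', b₀'⟩ := exists_eq_taylorWithinEval_add_of_holder hK hs hf hH x hξ'
  obtain ⟨r₁, e₁, b₁⟩ := exists_eq_taylorWithinEval_add_of_holder hK hs hf₁ hH₁ x hξ.ne'
  obtain ⟨r₁', e₁', b₁'⟩ := exists_eq_taylorWithinEval_add_of_holder hK hs hf₁ hH₁ x hξ'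
  obtain ⟨r₂, e₂, b₂⟩ := exists_eq_taylorWithinEval_add_of_holder hK hs hf₂ hH₂ x hξ.ne'
  obtain ⟨r₂', e₂', b₂'⟩ := exists_eq_taylorWithinEval_add_of_holder hK hs hf₂ hH₂ x hξ'
  simp only [abs_neg, abs_of_pos hξ, ← sub_eq_add_neg]
    at e₀ e₀' e₁ e₁' e₂ e₂' b₀ b₀' b₁ b₁' b₂ b₂'
  have hcancel : (deriv (deriv f) (x + ξ) + deriv (deriv f) (x - ξ)) / ξ ^ 2
      - 4 * (deriv f (x + ξ) - deriv f (x - ξ)) / ξ ^ 3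
      + 6 * (f (x - ξ) - 2 * f x + f (x + ξ)) / ξ ^ 4
      = r₂ + r₂' - 4 * r₁ + 4 * r₁' + 6 * r₀ + 6 * r₀' := by
    rw [e₀, e₀', e₁, e₁', e₂, e₂']
    simp only [taylor_within_apply, Finset.sum_range_succ, Finset.sum_range_one,
      iteratedDerivWithin_univ, iteratedDeriv_succ, iteratedDeriv_zero, Nat.factorial]
    field_simp
    ring
  rw [deriv_deriv_secondSymmDiff_div_sq x hf.of_succ hξ.ne', hcancel, abs_le]
  rw [abs_le] at b₀ b₀' b₁ b₁' b₂ b₂'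
  constructor <;> linarith

end SymmetricDifferences

theorem stmt_7 (u : ℝ → ℝ) (s K : ℝ) (hs : s ∈ Set.Ioc (0:ℝ) 1)
    (hu : ContDiff ℝ 3 u)
    (hu''' : ∀ x y : ℝ, |iteratedDeriv 3 u x - iteratedDeriv 3 u y| ≤ K * |x - y| ^ s) :
    ∃ C > 0, ∀ x ξ : ℝ, 0 < ξ →
      |deriv (deriv (fun ξ => (u (x - ξ) - 2 * u x + u (x + ξ)) / ξ ^ 2)) ξ| ≤
        C * ξ ^ (s - 1) := by
  have hK : 0 ≤ K := by simpa using (abs_nonneg _).trans (hu''' 1 0)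
  refine ⟨22 * K + 1, by positivity, fun x ξ hξ => ?_⟩
  calc _ ≤ 22 * K * ξ ^ (s - 1) :=
        abs_deriv_deriv_secondSymmDiff_div_sq_le x hK hs.1.le hu hu''' hξ
    _ ≤ (22 * K + 1) * ξ ^ (s - 1) := by gcongr; linarith
end
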